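/- arXiv:2204.08281 — 5 statements merged into one kernel-verified Lean document; each statement's English description precedes it below -/
import Mathlib

section
/- Let F : ℝ^d → ℝ be twice continuously differentiable and suppose the Hessian map x ↦ ∇²F(x) is H-Lipschitz in operator norm. Then for every δ > 0 the map h(x) := ∇F^δ(x) − ∇F(x) is (δH)-Lipschitz on ℝ^d, where F^δ is the δ-ball smoothing of F. -/
/-!
Differentiating under the integral sign gives `∇F^δ(x) = E_w[∇F(x + δw)]`, so
`h(x) = E_w[∇F(x + δw) − ∇F(x)]`. For fixed `w` the derivative of `x ↦ ∇F(x + δw) − ∇F(x)` is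
`∇²F(x + δw) − ∇²F(x)`, of norm at most `H‖δw‖ ≤ δH`; by the mean value inequality each integrand
is `(δH)`-Lipschitz in `x`, and averaging over `w` preserves this.
-/

open MeasureTheory Metric

noncomputable def uniformBall (d : ℕ) : Measure (EuclideanSpace ℝ (Fin d)) :=
  (volume (closedBall (0 : EuclideanSpace ℝ (Fin d)) 1))⁻¹ •
    volume.restrict (closedBall (0 : EuclideanSpace ℝ (Fin d)) 1)

/-- The `δ`-ball smoothing `F^δ(x) = E_{w∼𝔹}[F(x + δw)]`. -/
noncomputable def ballSmooth {d : ℕ} (F : EuclideanSpace ℝ (Fin d) → ℝ) (δ : ℝ)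
    (x : EuclideanSpace ℝ (Fin d)) : ℝ :=
  ∫ w, F (x + δ • w) ∂(uniformBall d)

lemma norm_sub_sub_sub_le_of_norm_fderiv_sub_le {E G : Type*} [NormedAddCommGroup E]
    [NormedSpace ℝ E] [NormedAddCommGroup G] [NormedSpace ℝ G] {f : E → G} {H : ℝ}
    (hf : Differentiable ℝ f) (hf' : ∀ x y, ‖fderiv ℝ f x - fderiv ℝ f y‖ ≤ H * ‖x - y‖)
    (v x y : E) : ‖(f (x + v) - f x) - (f (y + v) - f y)‖ ≤ H * ‖v‖ * ‖x - y‖ := by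
  have hderiv : ∀ z, HasFDerivAt (fun z ↦ f (z + v) - f z)
      (fderiv ℝ f (z + v) - fderiv ℝ f z) z := fun z ↦
    ((hf (z + v)).hasFDerivAt.comp z ((hasFDerivAt_id z).add_const v)).sub (hf z).hasFDerivAt
  have hbound : ∀ z, ‖fderiv ℝ f (z + v) - fderiv ℝ f z‖ ≤ H * ‖v‖ := fun z ↦ by
    simpa using hf' (z + v) z
  exact convex_univ.norm_image_sub_le_of_norm_hasFDerivWithin_le
    (fun z _ ↦ (hderiv z).hasFDerivWithinAt) (fun z _ ↦ hbound z) (Set.mem_univ y)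
    (Set.mem_univ x)

theorem ContDiff.gradient {E : Type*} [NormedAddCommGroup E] [InnerProductSpace ℝ E]
    [CompleteSpace E] {f : E → ℝ} {m n : WithTop ℕ∞} (hf : ContDiff ℝ n f) (hmn : m + 1 ≤ n) :
    ContDiff ℝ m (gradient f) :=
  (InnerProductSpace.toDual ℝ E).symm.toContinuousLinearEquiv.contDiff.comp (hf.fderiv_right hmn)

namespace uniformBall

variable {d : ℕ}

instance : IsProbabilityMeasure (uniformBall d) := by
  constructor
  rw [uniformBall, Measure.smul_apply, Measure.restrict_apply_univ, smul_eq_mul]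
  exact ENNReal.inv_mul_cancel (measure_closedBall_pos volume 0 one_pos).ne'
    measure_closedBall_lt_top.ne

lemma ae_norm_le_one : ∀ᵐ w ∂(uniformBall d), ‖w‖ ≤ 1 := by
  refine Measure.ae_smul_measure ?_ _
  filter_upwards [ae_restrict_mem measurableSet_closedBall] with w hw
  simpa using hw

lemma integrable_of_continuous {G : Type*} [NormedAddCommGroup G]
    {f : EuclideanSpace ℝ (Fin d) → G} (hf : Continuous f) : Integrable f (uniformBall d) :=
  (hf.continuousOn.integrableOn_compact (isCompact_closedBall _ _)).smul_measure
    (ENNReal.inv_ne_top.mpr (measure_closedBall_pos volume 0 one_pos).ne')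

end uniformBall

section ballSmooth

variable {d : ℕ} {F : EuclideanSpace ℝ (Fin d) → ℝ} {δ : ℝ}

lemma hasFDerivAt_ballSmooth (hF : ContDiff ℝ 1 F) (hδ : 0 ≤ δ) (x₀ : EuclideanSpace ℝ (Fin d)) :
    HasFDerivAt (ballSmooth F δ) (∫ w, fderiv ℝ F (x₀ + δ • w) ∂(uniformBall d)) x₀ := by
  have hF' : Continuous (fderiv ℝ F) := hF.continuous_fderiv one_ne_zero
  have hshift : Continuous fun w : EuclideanSpace ℝ (Fin d) ↦ x₀ + δ • w := by fun_prop
  obtain ⟨C, hC⟩ := (isCompact_closedBall x₀ (1 + δ)).exists_bound_of_continuousOn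
    hF'.continuousOn
  have hmem : ∀ w : EuclideanSpace ℝ (Fin d), ‖w‖ ≤ 1 →
      ∀ x ∈ ball x₀ 1, x + δ • w ∈ closedBall x₀ (1 + δ) := fun w hw x hx ↦ by
    rw [mem_closedBall, dist_eq_norm, add_sub_right_comm]
    calc ‖x - x₀ + δ • w‖ ≤ ‖x - x₀‖ + δ * ‖w‖ := by
          simpa [norm_smul, abs_of_nonneg hδ] using norm_add_le (x - x₀) (δ • w)
      _ ≤ 1 + δ := by
          gcongr
          · exact (mem_ball_iff_norm.mp hx).le
          · exact mul_le_of_le_one_right hδ hw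
  refine hasFDerivAt_integral_of_dominated_of_fderiv_le
    (F' := fun x w ↦ fderiv ℝ F (x + δ • w)) (bound := fun _ ↦ C)
    (ball_mem_nhds x₀ one_pos) (Filter.Eventually.of_forall fun x ↦ ?_)
    (uniformBall.integrable_of_continuous (hF.continuous.comp hshift))
    (hF'.comp hshift).aestronglyMeasurable ?_ (integrable_const C) ?_
  · exact (hF.continuous.comp (by fun_prop)).aestronglyMeasurable
  · filter_upwards [uniformBall.ae_norm_le_one] with w hw x hx
    exact hC _ (hmem w hw x hx)
  · refine Filter.Eventually.of_forall fun w x _ ↦ ?_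
    exact (hF.differentiable one_ne_zero _).hasFDerivAt.comp x ((hasFDerivAt_id x).add_const _)

lemma gradient_ballSmooth (hF : ContDiff ℝ 1 F) (hδ : 0 ≤ δ) (x : EuclideanSpace ℝ (Fin d)) :
    gradient (ballSmooth F δ) x = ∫ w, gradient F (x + δ • w) ∂(uniformBall d) := by
  rw [gradient, (hasFDerivAt_ballSmooth hF hδ x).fderiv]
  refine (ContinuousLinearMap.integral_comp_commSL (by simp)
    (InnerProductSpace.toDual ℝ _).symm.toContinuousLinearEquiv.toContinuousLinearMap
    (uniformBall.integrable_of_continuous ?_)).symm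
  exact (hF.continuous_fderiv one_ne_zero).comp (by fun_prop)

lemma gradient_ballSmooth_sub_gradient (hF : ContDiff ℝ 1 F) (hδ : 0 ≤ δ)
    (x : EuclideanSpace ℝ (Fin d)) :
    gradient (ballSmooth F δ) x - gradient F x =
      ∫ w, (gradient F (x + δ • w) - gradient F x) ∂(uniformBall d) := by
  have hint : Integrable (fun w ↦ gradient F (x + δ • w)) (uniformBall d) :=
    uniformBall.integrable_of_continuous
      ((hF.gradient (m := 0) (by norm_num)).continuous.comp (by fun_prop))
  rw [gradient_ballSmooth hF hδ, integral_sub hint (integrable_const _),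
    integral_const, probReal_univ, one_smul]

end ballSmooth

/-- If `F : ℝ^d → ℝ` is `C²` with `H`-Lipschitz Hessian (in operator norm),
then for every `δ > 0` the map `h(x) = ∇F^δ(x) − ∇F(x)` is `(δH)`-Lipschitz. -/
theorem stmt3 {d : ℕ} (F : EuclideanSpace ℝ (Fin d) → ℝ)
    (hF : ContDiff ℝ 2 F) (H : ℝ) (hH : 0 ≤ H)
    (hHess : ∀ x y, ‖fderiv ℝ (gradient F) x - fderiv ℝ (gradient F) y‖ ≤ H * ‖x - y‖)
    (δ : ℝ) (hδ : 0 < δ) :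
    ∀ x y, ‖(gradient (ballSmooth F δ) x - gradient F x)
        - (gradient (ballSmooth F δ) y - gradient F y)‖ ≤ (δ * H) * ‖x - y‖ := by
  intro x y
  have hgrad : ContDiff ℝ 1 (gradient F) := hF.gradient (by norm_num)
  have hint : ∀ z, Integrable (fun w ↦ gradient F (z + δ • w) - gradient F z) (uniformBall d) :=
    fun z ↦ uniformBall.integrable_of_continuous
      (hgrad.continuous.comp (by fun_prop) |>.sub continuous_const)
  have hpointwise : ∀ w : EuclideanSpace ℝ (Fin d), ‖w‖ ≤ 1 →
      ‖(gradient F (x + δ • w) - gradient F x) - (gradient F (y + δ • w) - gradient F y)‖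
        ≤ δ * H * ‖x - y‖ := fun w hw ↦ by
    have hδw : ‖δ • w‖ ≤ δ := by
      rw [norm_smul, Real.norm_of_nonneg hδ.le]
      exact mul_le_of_le_one_right hδ.le hw
    calc _ ≤ H * ‖δ • w‖ * ‖x - y‖ := norm_sub_sub_sub_le_of_norm_fderiv_sub_le
            (hgrad.differentiable one_ne_zero) hHess (δ • w) x y
      _ ≤ H * δ * ‖x - y‖ := by gcongr
      _ = δ * H * ‖x - y‖ := by ring
  have hF₁ : ContDiff ℝ 1 F := hF.of_le one_le_two
  rw [gradient_ballSmooth_sub_gradient hF₁ hδ.le, gradient_ballSmooth_sub_gradient hF₁ hδ.le,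
    ← integral_sub (hint x) (hint y)]
  simpa using norm_integral_le_of_norm_le_const
    (uniformBall.ae_norm_le_one.mono fun w hw ↦ hpointwise w hw)
end

section
/- Let K ⊆ ℝ^d be a nonempty closed convex set, let F₁ : ℝ^d → ℝ be differentiable and α-strongly convex, and let F₂ : ℝ^d → ℝ be differentiable. Let x₁ ∈ K be the minimizer of F₁ over K and let x₂ ∈ K satisfy the first-order condition ⟨∇F₂(x₂), x − x₂⟩ ≥ 0 for all x ∈ K. If ‖∇F₂(x₂) − ∇F₁(x₂)‖ ≤ ε, then ‖x₁ − x₂‖ ≤ ε/α. -/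
open RealInnerProductSpace

/-!
Both points solve a variational inequality over `K`: `x₁` for `∇F₁` (first-order optimality of a
minimizer) and `x₂` for `∇F₂`. Adding the two inequalities and using strong monotonicity of `∇F₁`
gives `α ‖x₁ - x₂‖² ≤ ⟪∇F₂ x₂ - ∇F₁ x₂, x₁ - x₂⟫ ≤ ε ‖x₁ - x₂‖`.
-/

variable {E : Type*} [NormedAddCommGroup E] [InnerProductSpace ℝ E]

theorem IsMinOn.inner_gradient_sub_nonneg [CompleteSpace E] {f : E → ℝ} {f' : E} {s : Set E}
    {x y : E} (hmin : IsMinOn f s x) (hf : HasGradientAt f f' x) (hseg : segment ℝ x y ⊆ s) :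
    0 ≤ ⟪f', y - x⟫ := by
  simpa [InnerProductSpace.toDual_apply_apply] using
    hmin.localize.hasFDerivWithinAt_nonneg hf.hasFDerivAt.hasFDerivWithinAt
      (sub_mem_posTangentConeAt_of_segment_subset hseg)

theorem mul_norm_sub_le_of_inner_nonneg {g : E → E} {α : ℝ}
    (hg : ∀ x y, α * ‖x - y‖ ^ 2 ≤ ⟪g x - g y, x - y⟫) {x₁ x₂ v : E}
    (h₁ : 0 ≤ ⟪g x₁, x₂ - x₁⟫) (h₂ : 0 ≤ ⟪v, x₁ - x₂⟫) :
    α * ‖x₁ - x₂‖ ≤ ‖v - g x₂‖ := by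
  have hsq : α * ‖x₁ - x₂‖ ^ 2 ≤ ‖v - g x₂‖ * ‖x₁ - x₂‖ :=
    calc α * ‖x₁ - x₂‖ ^ 2 ≤ ⟪g x₁ - g x₂, x₁ - x₂⟫ := hg x₁ x₂
      _ = ⟪v - g x₂, x₁ - x₂⟫ - ⟪g x₁, x₂ - x₁⟫ - ⟪v, x₁ - x₂⟫ := by
        rw [← neg_sub x₁ x₂, inner_neg_right, inner_sub_left, inner_sub_left]; ring
      _ ≤ ⟪v - g x₂, x₁ - x₂⟫ := by linarith
      _ ≤ ‖v - g x₂‖ * ‖x₁ - x₂‖ := real_inner_le_norm _ _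
  rcases (norm_nonneg (x₁ - x₂)).eq_or_lt with h0 | hpos
  · simp [← h0]
  · rw [pow_two, ← mul_assoc] at hsq
    exact le_of_mul_le_mul_right hsq hpos

theorem stmt7_general {d : ℕ} (K : Set (EuclideanSpace ℝ (Fin d)))
    (hKcv : Convex ℝ K)
    (F₁ F₂ : EuclideanSpace ℝ (Fin d) → ℝ)
    (hF₁ : Differentiable ℝ F₁)
    (α : ℝ) (hα : 0 < α)
    (hsc : ∀ x y, α * ‖x - y‖ ^ 2 ≤ ⟪gradient F₁ x - gradient F₁ y, x - y⟫)
    (x₁ : EuclideanSpace ℝ (Fin d)) (hx₁K : x₁ ∈ K) (hx₁ : IsMinOn F₁ K x₁)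
    (x₂ : EuclideanSpace ℝ (Fin d)) (hx₂K : x₂ ∈ K)
    (hfoc : ∀ x ∈ K, 0 ≤ ⟪gradient F₂ x₂, x - x₂⟫)
    (ε : ℝ)
    (hclose : ‖gradient F₂ x₂ - gradient F₁ x₂‖ ≤ ε) :
    ‖x₁ - x₂‖ ≤ ε / α := by
  have hfoc₁ : 0 ≤ ⟪gradient F₁ x₁, x₂ - x₁⟫ :=
    hx₁.inner_gradient_sub_nonneg (hF₁ x₁).hasGradientAt (hKcv.segment_subset hx₁K hx₂K)
  rw [le_div_iff₀' hα]
  exact (mul_norm_sub_le_of_inner_nonneg hsc hfoc₁ (hfoc x₁ hx₁K)).trans hclose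

/-- Let `K ⊆ ℝ^d` be nonempty closed convex, `F₁` differentiable and
`α`-strongly convex with minimizer `x₁` over `K`, and `F₂` differentiable with `x₂ ∈ K`
satisfying the first-order condition `⟨∇F₂(x₂), x − x₂⟩ ≥ 0` for all `x ∈ K`. If
`‖∇F₂(x₂) − ∇F₁(x₂)‖ ≤ ε` then `‖x₁ − x₂‖ ≤ ε/α`. -/
theorem stmt7 {d : ℕ} (K : Set (EuclideanSpace ℝ (Fin d)))
    (hKne : K.Nonempty) (hKcl : IsClosed K) (hKcv : Convex ℝ K)
    (F₁ F₂ : EuclideanSpace ℝ (Fin d) → ℝ)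
    (hF₁ : Differentiable ℝ F₁) (hF₂ : Differentiable ℝ F₂)
    (α : ℝ) (hα : 0 < α)
    (hsc : ∀ x y, α * ‖x - y‖ ^ 2 ≤ ⟪gradient F₁ x - gradient F₁ y, x - y⟫)
    (x₁ : EuclideanSpace ℝ (Fin d)) (hx₁K : x₁ ∈ K) (hx₁ : IsMinOn F₁ K x₁)
    (x₂ : EuclideanSpace ℝ (Fin d)) (hx₂K : x₂ ∈ K)
    (hfoc : ∀ x ∈ K, 0 ≤ ⟪gradient F₂ x₂, x - x₂⟫)
    (ε : ℝ) (hε : 0 ≤ ε)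
    (hclose : ‖gradient F₂ x₂ - gradient F₁ x₂‖ ≤ ε) :
    ‖x₁ - x₂‖ ≤ ε / α :=
  stmt7_general K hKcv F₁ F₂ hF₁ α hα hsc x₁ hx₁K hx₁ x₂ hx₂K hfoc ε hclose
end

section
/- Let X ⊆ ℝ^d be a nonempty closed convex set, and let F : ℝ^d → ℝ be differentiable, α-strongly convex, with G-Lipschitz gradient. Let x* be the minimizer of F over X, and for δ ∈ (0,1) let x̃ be the minimizer of F over the shrunken set (1−δ)X = {(1−δ)x : x ∈ X}. Then ‖x* − x̃‖ ≤ δ(1 + G/α)‖x*‖. -/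
/-!
Compare `x̃` with the feasible point `y = (1 - δ) x*` of the shrunken set, which lies at
distance `δ ‖x*‖` from `x*`. The first-order optimality conditions at `x̃` (tested against `y`)
and at `x*` (tested against `x̃ / (1 - δ)`) give `⟪∇F x̃ - ∇F x*, x̃ - y⟫ ≤ 0`. Strong convexity
then yields `α ‖x̃ - y‖² ≤ ⟪∇F x* - ∇F y, x̃ - y⟫ ≤ G δ ‖x*‖ ‖x̃ - y‖`, and the triangle
inequality finishes.
-/

open RealInnerProductSpace Pointwise

section

variable {E : Type*} [NormedAddCommGroup E] [InnerProductSpace ℝ E]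

theorem mul_norm_le_of_mul_sq_le_inner {α : ℝ} {v e : E} (h : α * ‖e‖ ^ 2 ≤ ⟪v, e⟫) :
    α * ‖e‖ ≤ ‖v‖ := by
  rcases (norm_nonneg e).eq_or_lt with he | he
  · rw [← he, mul_zero]
    exact norm_nonneg v
  · have : α * ‖e‖ * ‖e‖ ≤ ‖v‖ * ‖e‖ := by
      rw [mul_assoc, ← sq]
      exact h.trans (real_inner_le_norm v e)
    exact le_of_mul_le_mul_right this he

variable [CompleteSpace E] {f : E → ℝ}

theorem IsMinOn.inner_gradient_sub_nonneg_s8 {s : Set E} {a z : E} (hmin : IsMinOn f s a)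
    (hs : Convex ℝ s) (ha : a ∈ s) (hz : z ∈ s) (hf : DifferentiableAt ℝ f a) :
    0 ≤ ⟪gradient f a, z - a⟫ := by
  have hcone : z - a ∈ posTangentConeAt s a :=
    sub_mem_posTangentConeAt_of_segment_subset (hs.segment_subset ha hz)
  simpa using hmin.localize.hasFDerivWithinAt_nonneg
    hf.hasGradientAt.hasFDerivAt.hasFDerivWithinAt hcone

theorem inner_gradient_sub_nonpos_of_isMinOn_smul {X : Set E} (hX : Convex ℝ X) {c : ℝ}
    (hc : 0 ≤ c) {x y : E} (hx : x ∈ X) (hxmin : IsMinOn f X x) (hfx : DifferentiableAt ℝ f x)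
    (hy : y ∈ c • X) (hymin : IsMinOn f (c • X) y) (hfy : DifferentiableAt ℝ f y) :
    ⟪gradient f y - gradient f x, y - c • x⟫ ≤ 0 := by
  obtain ⟨u, hu, rfl⟩ := Set.mem_smul_set.mp hy
  have hy_opt : 0 ≤ ⟪gradient f (c • u), c • x - c • u⟫ :=
    hymin.inner_gradient_sub_nonneg_s8 (hX.smul c) (Set.smul_mem_smul_set hu)
      (Set.smul_mem_smul_set hx) hfy
  have hx_opt : 0 ≤ ⟪gradient f x, u - x⟫ := hxmin.inner_gradient_sub_nonneg_s8 hX hx hu hfx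
  have hx_opt' : 0 ≤ ⟪gradient f x, c • u - c • x⟫ := by
    rw [← smul_sub, real_inner_smul_right]
    positivity
  rw [← neg_sub (c • u), inner_neg_right] at hy_opt
  rw [inner_sub_left]
  linarith

end

theorem stmt8_general {d : ℕ} (X : Set (EuclideanSpace ℝ (Fin d)))
    (hXcv : Convex ℝ X)
    (F : EuclideanSpace ℝ (Fin d) → ℝ) (hF : Differentiable ℝ F)
    (α G : ℝ) (hα : 0 < α)
    (hsc : ∀ x y, α * ‖x - y‖ ^ 2 ≤ ⟪gradient F x - gradient F y, x - y⟫)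
    (hGlip : ∀ x y, ‖gradient F x - gradient F y‖ ≤ G * ‖x - y‖)
    (δ : ℝ) (hδ0 : 0 < δ) (hδ1 : δ < 1)
    (xstar : EuclideanSpace ℝ (Fin d)) (hxsX : xstar ∈ X) (hxs : IsMinOn F X xstar)
    (xtil : EuclideanSpace ℝ (Fin d)) (hxtX : xtil ∈ (1 - δ) • X)
    (hxt : IsMinOn F ((1 - δ) • X) xtil) :
    ‖xstar - xtil‖ ≤ δ * (1 + G / α) * ‖xstar‖ := by
  set y := (1 - δ) • xstar
  have hopt : ⟪gradient F xtil - gradient F xstar, xtil - y⟫ ≤ 0 :=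
    inner_gradient_sub_nonpos_of_isMinOn_smul hXcv (by linarith) hxsX hxs (hF _) hxtX hxt (hF _)
  have hdist : ‖xstar - y‖ = δ * ‖xstar‖ := by
    rw [show xstar - y = δ • xstar by module, norm_smul, Real.norm_of_nonneg hδ0.le]
  have hcoer : α * ‖xtil - y‖ ^ 2 ≤ ⟪gradient F xstar - gradient F y, xtil - y⟫ := by
    have := hsc xtil y
    rw [inner_sub_left] at this hopt ⊢
    linarith
  have hnear : ‖xtil - y‖ ≤ G / α * (δ * ‖xstar‖) := by
    rw [div_mul_eq_mul_div, le_div_iff₀' hα, ← hdist]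
    exact (mul_norm_le_of_mul_sq_le_inner hcoer).trans (hGlip xstar y)
  calc ‖xstar - xtil‖ ≤ ‖xstar - y‖ + ‖xtil - y‖ := by
        simpa only [dist_eq_norm] using dist_triangle_right xstar xtil y
    _ ≤ δ * ‖xstar‖ + G / α * (δ * ‖xstar‖) := by rw [hdist]; gcongr
    _ = δ * (1 + G / α) * ‖xstar‖ := by ring

/-- Let `X ⊆ ℝ^d` be nonempty closed convex, `F` differentiable,
`α`-strongly convex with `G`-Lipschitz gradient, `x*` the minimizer of `F` over `X` and
`x̃` the minimizer of `F` over the shrunken set `(1−δ)X`, where `δ ∈ (0,1)`. Then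
`‖x* − x̃‖ ≤ δ(1 + G/α)‖x*‖`. -/
theorem stmt8 {d : ℕ} (X : Set (EuclideanSpace ℝ (Fin d)))
    (hXne : X.Nonempty) (hXcl : IsClosed X) (hXcv : Convex ℝ X)
    (F : EuclideanSpace ℝ (Fin d) → ℝ) (hF : Differentiable ℝ F)
    (α G : ℝ) (hα : 0 < α) (hG : 0 ≤ G)
    (hsc : ∀ x y, α * ‖x - y‖ ^ 2 ≤ ⟪gradient F x - gradient F y, x - y⟫)
    (hGlip : ∀ x y, ‖gradient F x - gradient F y‖ ≤ G * ‖x - y‖)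
    (δ : ℝ) (hδ0 : 0 < δ) (hδ1 : δ < 1)
    (xstar : EuclideanSpace ℝ (Fin d)) (hxsX : xstar ∈ X) (hxs : IsMinOn F X xstar)
    (xtil : EuclideanSpace ℝ (Fin d)) (hxtX : xtil ∈ (1 - δ) • X)
    (hxt : IsMinOn F ((1 - δ) • X) xtil) :
    ‖xstar - xtil‖ ≤ δ * (1 + G / α) * ‖xstar‖ :=
  stmt8_general X hXcv F hF α G hα hsc hGlip δ hδ0 hδ1 xstar hxsX hxs xtil hxtX hxt
end

section
/- Let X ⊆ ℝ^d be a nonempty closed convex set, let F : ℝ^d → ℝ be differentiable, α-strongly convex, with G-Lipschitz gradient, and let x* be the minimizer of F over X. Fix x ∈ X, a step size η with 0 < η ≤ α/(4G²), and constants σ, C ≥ 0 with C² ≤ αησ². Let ĝ be a square-integrable random vector in ℝ^d with mean μ = E[ĝ] satisfying E‖ĝ − μ‖² ≤ σ² and ‖μ − ∇F(x)‖ ≤ C. Then the updated point x⁺ = proj_X(x − η ĝ) satisfies E‖x⁺ − x*‖² ≤ (1/(1 + ηα))‖x − x*‖² + 4η²σ²/(1 + ηα). -/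
/-!
The nearest-point characterisation of `x⁺` gives the three-point bound
`‖x⁺ - x*‖² ≤ ‖x - x*‖² - ‖x - x⁺‖² + 2η⟪ĝ, x* - x⁺⟫`. Split `ĝ` into the noise `ĝ - E ĝ`, the
bias `E ĝ - ∇F(x)` and `∇F(x)`. Strong convexity, the descent lemma and first-order optimality of
`x*` bound the gradient part by `(G/2)‖x - x⁺‖² - (α/2)(‖x - x*‖² + ‖x⁺ - x*‖²)`. Young's
inequality absorbs the bias into `α‖x⁺ - x*‖²` at the cost of `ηC²/α ≤ η²σ²`, and the noise
paired with `x - x⁺` into `‖x - x⁺‖²` (here `ηG ≤ 1/4`, as `α ≤ G`). The remaining noise term is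
paired with the deterministic vector `x* - x` and has mean zero, so
`E‖x⁺ - x*‖² ≤ (1 - ηα)‖x - x*‖² + (7/3)η²σ²`, which implies the claim for `ηα ≤ 1/4`.
-/

open MeasureTheory RealInnerProductSpace

lemma add_deriv_add_half_le_of_deriv_ge {φ φ' : ℝ → ℝ} {c : ℝ}
    (hφ : ∀ s, HasDerivAt φ (φ' s) s) (h : ∀ s ∈ Set.Ioo (0 : ℝ) 1, φ' 0 + c * s ≤ φ' s) :
    φ 0 + φ' 0 + c / 2 ≤ φ 1 := by
  have hψ (s : ℝ) : HasDerivAt (fun s => φ s - φ' 0 * s - c / 2 * s ^ 2)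
      (φ' s - φ' 0 - c * s) s := by
    refine (((hφ s).fun_sub ((hasDerivAt_id' s).const_mul (φ' 0))).fun_sub
      ((hasDerivAt_pow 2 s).const_mul (c / 2))).congr_deriv ?_
    norm_num
    ring
  have hmono : MonotoneOn (fun s => φ s - φ' 0 * s - c / 2 * s ^ 2) (Set.Icc 0 1) := by
    refine monotoneOn_of_hasDerivWithinAt_nonneg (convex_Icc 0 1)
      (fun s _ => (hψ s).continuousAt.continuousWithinAt)
      (fun s _ => (hψ s).hasDerivWithinAt) fun s hs => ?_
    rw [interior_Icc] at hs
    linarith [h s hs]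
  have := hmono (Set.left_mem_Icc.2 zero_le_one) (Set.right_mem_Icc.2 zero_le_one) zero_le_one
  simp only at this
  linarith

lemma le_add_deriv_add_half_of_deriv_le {φ φ' : ℝ → ℝ} {c : ℝ}
    (hφ : ∀ s, HasDerivAt φ (φ' s) s) (h : ∀ s ∈ Set.Ioo (0 : ℝ) 1, φ' s ≤ φ' 0 + c * s) :
    φ 1 ≤ φ 0 + φ' 0 + c / 2 := by
  have := add_deriv_add_half_le_of_deriv_ge (φ := -φ) (φ' := -φ') (c := -c)
    (fun s => (hφ s).neg) fun s hs => by simp only [Pi.neg_apply]; linarith [h s hs]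
  simp only [Pi.neg_apply] at this
  linarith

lemma two_mul_mul_le_mul_sq_add_sq_div {α : ℝ} (hα : 0 < α) (C r : ℝ) :
    2 * C * r ≤ α * r ^ 2 + C ^ 2 / α := by
  have h : α * r ^ 2 + C ^ 2 / α - 2 * C * r = (α * r - C) ^ 2 / α := by
    field_simp
    ring
  linarith [div_nonneg (sq_nonneg (α * r - C)) hα.le]

lemma one_sub_mul_add_le_div_one_add {t r s : ℝ} (ht : 0 ≤ t) (ht' : t ≤ 1 / 4) (hr : 0 ≤ r)
    (hs : 0 ≤ s) : (1 - t) * r + 7 / 3 * s ≤ 1 / (1 + t) * r + 4 * s / (1 + t) := by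
  rw [one_div_mul_eq_div, ← add_div, le_div_iff₀ (by linarith)]
  nlinarith [mul_nonneg (mul_nonneg ht ht) hr, mul_nonneg ht hs]

section InnerProductSpace

variable {E : Type*} [NormedAddCommGroup E] [InnerProductSpace ℝ E]

def IsNearestPointIn (K : Set E) (u p : E) : Prop :=
  p ∈ K ∧ ∀ y ∈ K, ‖p - u‖ ≤ ‖y - u‖

theorem IsNearestPointIn.inner_sub_nonpos {K : Set E} {u p y : E} (hK : Convex ℝ K)
    (hp : IsNearestPointIn K u p) (hy : y ∈ K) : ⟪u - p, y - p⟫ ≤ 0 := by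
  have : Nonempty K := ⟨⟨p, hp.1⟩⟩
  refine (norm_eq_iInf_iff_real_inner_le_zero hK hp.1).1 (le_antisymm ?_ ?_) y hy
  · exact le_ciInf fun z => by simpa only [norm_sub_rev u] using hp.2 z z.2
  · exact ciInf_le ⟨0, Set.forall_mem_range.2 fun _ => norm_nonneg _⟩ (⟨p, hp.1⟩ : K)

theorem IsNearestPointIn.norm_sub_sq_le {K : Set E} {x w p z : E} {η : ℝ} (hK : Convex ℝ K)
    (hp : IsNearestPointIn K (x - η • w) p) (hz : z ∈ K) :
    ‖p - z‖ ^ 2 ≤ ‖x - z‖ ^ 2 - ‖x - p‖ ^ 2 + 2 * η * ⟪w, z - p⟫ := by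
  have hvi := hp.inner_sub_nonpos hK hz
  rw [show x - η • w - p = (x - p) - η • w by abel, inner_sub_left, real_inner_smul_left] at hvi
  have hsplit : ‖x - z‖ ^ 2 = ‖x - p‖ ^ 2 - 2 * ⟪x - p, z - p⟫ + ‖p - z‖ ^ 2 := by
    rw [show x - z = (x - p) - (z - p) by abel, norm_sub_sq_real, norm_sub_rev z]
  linarith

variable [CompleteSpace E]

lemma hasDerivAt_comp_add_smul {F : E → ℝ} {p v : E} {t : ℝ}
    (hF : DifferentiableAt ℝ F (p + t • v)) :
    HasDerivAt (fun s : ℝ => F (p + s • v)) ⟪gradient F (p + t • v), v⟫ t := by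
  have hline : HasDerivAt (fun s : ℝ => p + s • v) v t := by
    simpa using ((hasDerivAt_id t).smul_const v).const_add p
  exact hF.hasGradientAt.hasFDerivAt.comp_hasDerivAt t hline

theorem add_inner_gradient_add_le_of_strongMono {F : E → ℝ} (hF : Differentiable ℝ F) {α : ℝ}
    (hsc : ∀ x y, α * ‖x - y‖ ^ 2 ≤ ⟪gradient F x - gradient F y, x - y⟫) (p q : E) :
    F p + ⟪gradient F p, q - p⟫ + α / 2 * ‖q - p‖ ^ 2 ≤ F q := by
  have key := add_deriv_add_half_le_of_deriv_ge (c := α * ‖q - p‖ ^ 2)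
    (fun s => hasDerivAt_comp_add_smul (hF (p + s • (q - p)))) fun s hs => by
      have h := hsc (p + s • (q - p)) p
      rw [add_sub_cancel_left, norm_smul, mul_pow, Real.norm_eq_abs, sq_abs,
        real_inner_smul_right, inner_sub_left] at h
      simp only [zero_smul, add_zero]
      nlinarith [hs.1]
  simpa [mul_div_right_comm] using key

theorem le_add_inner_gradient_add_of_lipschitz {F : E → ℝ} (hF : Differentiable ℝ F) {G : ℝ}
    (hGlip : ∀ x y, ‖gradient F x - gradient F y‖ ≤ G * ‖x - y‖) (p q : E) :
    F q ≤ F p + ⟪gradient F p, q - p⟫ + G / 2 * ‖q - p‖ ^ 2 := by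
  have key := le_add_deriv_add_half_of_deriv_le (c := G * ‖q - p‖ ^ 2)
    (fun s => hasDerivAt_comp_add_smul (hF (p + s • (q - p)))) fun s hs => by
      have h := (real_inner_le_norm _ _).trans
        (mul_le_mul_of_nonneg_right (hGlip (p + s • (q - p)) p) (norm_nonneg (q - p)))
      rw [add_sub_cancel_left, norm_smul, Real.norm_eq_abs, abs_of_pos hs.1, inner_sub_left] at h
      simp only [zero_smul, add_zero]
      linarith
  simpa [mul_div_right_comm] using key

theorem IsMinOn.inner_gradient_nonneg {F : E → ℝ} {X : Set E} {a y : E}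
    (hF : DifferentiableAt ℝ F a) (hX : Convex ℝ X) (ha : a ∈ X) (hmin : IsMinOn F X a)
    (hy : y ∈ X) : 0 ≤ ⟪gradient F a, y - a⟫ :=
  hmin.localize.hasFDerivWithinAt_nonneg hF.hasGradientAt.hasFDerivAt.hasFDerivWithinAt
    (sub_mem_posTangentConeAt_of_segment_subset (hX.segment_subset ha hy))

theorem inner_gradient_sub_le_of_isMinOn {F : E → ℝ} (hF : Differentiable ℝ F) {α G : ℝ}
    (hsc : ∀ x y, α * ‖x - y‖ ^ 2 ≤ ⟪gradient F x - gradient F y, x - y⟫)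
    (hGlip : ∀ x y, ‖gradient F x - gradient F y‖ ≤ G * ‖x - y‖)
    {X : Set E} (hX : Convex ℝ X) {a p : E} (ha : a ∈ X) (hmin : IsMinOn F X a) (hp : p ∈ X)
    (x : E) :
    ⟪gradient F x, a - p⟫
      ≤ G / 2 * ‖x - p‖ ^ 2 - α / 2 * ‖x - a‖ ^ 2 - α / 2 * ‖p - a‖ ^ 2 := by
  have hxa := add_inner_gradient_add_le_of_strongMono hF hsc x a
  have hxp := le_add_inner_gradient_add_of_lipschitz hF hGlip x p
  have hap := add_inner_gradient_add_le_of_strongMono hF hsc a p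
  have hopt := hmin.inner_gradient_nonneg (hF a) hX ha hp
  have hsplit : ⟪gradient F x, a - p⟫ = ⟪gradient F x, a - x⟫ - ⟪gradient F x, p - x⟫ := by
    rw [← inner_sub_right, sub_sub_sub_cancel_right]
  rw [norm_sub_rev a, norm_sub_rev p] at *
  linarith

theorem le_of_strongMono_of_lipschitz [Nontrivial E] {F : E → ℝ} {α G : ℝ}
    (hsc : ∀ x y, α * ‖x - y‖ ^ 2 ≤ ⟪gradient F x - gradient F y, x - y⟫)
    (hGlip : ∀ x y, ‖gradient F x - gradient F y‖ ≤ G * ‖x - y‖) : α ≤ G := by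
  obtain ⟨u, hu⟩ := exists_ne (0 : E)
  have h := (hsc u 0).trans <| (real_inner_le_norm _ _).trans <|
    mul_le_mul_of_nonneg_right (hGlip u 0) (norm_nonneg _)
  rw [sub_zero, mul_assoc, ← sq] at h
  exact le_of_mul_le_mul_right h (by positivity)

theorem IsNearestPointIn.norm_sub_sq_le_of_strongMono {F : E → ℝ} (hF : Differentiable ℝ F)
    {α G : ℝ} (hsc : ∀ x y, α * ‖x - y‖ ^ 2 ≤ ⟪gradient F x - gradient F y, x - y⟫)
    (hGlip : ∀ x y, ‖gradient F x - gradient F y‖ ≤ G * ‖x - y‖)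
    {X : Set E} (hX : Convex ℝ X) {a : E} (ha : a ∈ X) (hmin : IsMinOn F X a)
    {x w m p : E} {η C : ℝ} (hα : 0 < α) (hη : 0 ≤ η) (hηG : η * G ≤ 1 / 4)
    (hbias : ‖m - gradient F x‖ ≤ C) (hp : IsNearestPointIn X (x - η • w) p) :
    ‖p - a‖ ^ 2 ≤ (1 - η * α) * ‖x - a‖ ^ 2 + η * C ^ 2 / α
      + 4 / 3 * η ^ 2 * ‖w - m‖ ^ 2 + 2 * η * ⟪a - x, w - m⟫ := by
  have hthree := hp.norm_sub_sq_le hX ha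
  have hgrad := mul_le_mul_of_nonneg_left
    (inner_gradient_sub_le_of_isMinOn hF hsc hGlip hX ha hmin hp.1 x) (by positivity : 0 ≤ 2 * η)
  have hsplit : ⟪w, a - p⟫ = ⟪a - x, w - m⟫ + ⟪w - m, x - p⟫ + ⟪m - gradient F x, a - p⟫
      + ⟪gradient F x, a - p⟫ := by
    simp only [inner_sub_left, inner_sub_right, real_inner_comm a, real_inner_comm x]
    ring
  have hnoise : 2 * η * ⟪w - m, x - p⟫ ≤ 3 / 4 * ‖x - p‖ ^ 2 + 4 / 3 * η ^ 2 * ‖w - m‖ ^ 2 := by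
    have := mul_le_mul_of_nonneg_left (real_inner_le_norm (w - m) (x - p))
      (by positivity : 0 ≤ 2 * η)
    nlinarith [sq_nonneg (2 * η * ‖w - m‖ - 3 / 2 * ‖x - p‖)]
  have hbias' : 2 * ⟪m - gradient F x, a - p⟫ ≤ α * ‖p - a‖ ^ 2 + C ^ 2 / α := by
    have := (real_inner_le_norm _ _).trans
      (mul_le_mul_of_nonneg_right hbias (norm_nonneg (a - p)))
    rw [norm_sub_rev a] at this
    linarith [two_mul_mul_le_mul_sq_add_sq_div hα C ‖p - a‖]
  have hsmooth := mul_le_mul_of_nonneg_right hηG (sq_nonneg ‖x - p‖)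
  have hbias'' := mul_le_mul_of_nonneg_left hbias' hη
  rw [mul_div_assoc]
  nlinarith

theorem integral_le_of_le_add_inner_centered {Ω : Type*} [MeasurableSpace Ω] {μ : Measure Ω}
    [IsProbabilityMeasure μ] {g : Ω → E} (hg : MemLp g 2 μ) {f : Ω → ℝ} (hf : ∀ ω, 0 ≤ f ω)
    {a b c : ℝ} {z : E}
    (h : ∀ ω, f ω ≤ a + b * ‖g ω - ∫ ω', g ω' ∂μ‖ ^ 2 + c * ⟪z, g ω - ∫ ω', g ω' ∂μ⟫) :
    ∫ ω, f ω ∂μ ≤ a + b * ∫ ω, ‖g ω - ∫ ω', g ω' ∂μ‖ ^ 2 ∂μ := by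
  set m := ∫ ω, g ω ∂μ
  have hgi : Integrable g μ := hg.integrable one_le_two
  have hξ : Integrable (fun ω => g ω - m) μ := hgi.sub (integrable_const m)
  have hξ2 : Integrable (fun ω => ‖g ω - m‖ ^ 2) μ :=
    (memLp_two_iff_integrable_sq_norm hξ.1).1 (hg.sub (memLp_const m))
  have hcentered : ∫ ω, ⟪z, g ω - m⟫ ∂μ = 0 := by
    rw [integral_inner hξ, integral_sub hgi (integrable_const m), integral_const]
    simp [m]
  have hbound : Integrable (fun ω => a + b * ‖g ω - m‖ ^ 2 + c * ⟪z, g ω - m⟫) μ :=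
    ((integrable_const a).add (hξ2.const_mul b)).add ((hξ.const_inner z).const_mul c)
  calc ∫ ω, f ω ∂μ ≤ ∫ ω, (a + b * ‖g ω - m‖ ^ 2 + c * ⟪z, g ω - m⟫) ∂μ :=
        integral_mono_of_nonneg (ae_of_all _ hf) hbound (ae_of_all _ h)
    _ = a + b * ∫ ω, ‖g ω - m‖ ^ 2 ∂μ := by
        rw [integral_add (f := fun ω => a + b * ‖g ω - m‖ ^ 2)
            ((integrable_const a).add (hξ2.const_mul b)) ((hξ.const_inner z).const_mul c),
          integral_add (integrable_const a) (hξ2.const_mul b), integral_const_mul,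
          integral_const_mul, hcentered, integral_const]
        simp

end InnerProductSpace

theorem stmt15_general {d : ℕ} {Ω : Type*} [MeasurableSpace Ω]
    (μ : Measure Ω) [IsProbabilityMeasure μ]
    (X : Set (EuclideanSpace ℝ (Fin d)))
    (hXcv : Convex ℝ X)
    (F : EuclideanSpace ℝ (Fin d) → ℝ) (hF : Differentiable ℝ F)
    (α G : ℝ) (hα : 0 < α)
    (hsc : ∀ x y, α * ‖x - y‖ ^ 2 ≤ ⟪gradient F x - gradient F y, x - y⟫)
    (hGlip : ∀ x y, ‖gradient F x - gradient F y‖ ≤ G * ‖x - y‖)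
    (xstar : EuclideanSpace ℝ (Fin d)) (hxsX : xstar ∈ X) (hxs : IsMinOn F X xstar)
    (x : EuclideanSpace ℝ (Fin d))
    (η σ C : ℝ) (hη0 : 0 < η) (hη : η ≤ α / (4 * G ^ 2))
    (hCσ : C ^ 2 ≤ α * η * σ ^ 2)
    (g : Ω → EuclideanSpace ℝ (Fin d)) (hg : MemLp g 2 μ)
    (hbias : ‖(∫ ω, g ω ∂μ) - gradient F x‖ ≤ C)
    (hvar : ∫ ω, ‖g ω - ∫ ω', g ω' ∂μ‖ ^ 2 ∂μ ≤ σ ^ 2)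
    (xp : Ω → EuclideanSpace ℝ (Fin d))
    (hxp : ∀ ω, xp ω ∈ X ∧
      ∀ y ∈ X, ‖xp ω - (x - η • g ω)‖ ≤ ‖y - (x - η • g ω)‖) :
    ∫ ω, ‖xp ω - xstar‖ ^ 2 ∂μ
      ≤ (1 / (1 + η * α)) * ‖x - xstar‖ ^ 2 + 4 * η ^ 2 * σ ^ 2 / (1 + η * α) := by
  rcases subsingleton_or_nontrivial (EuclideanSpace ℝ (Fin d)) with hE | hE
  · simp [Subsingleton.elim (xp _) xstar]
    positivity
  have hαG := le_of_strongMono_of_lipschitz hsc hGlip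
  have hG0 : 0 < G := hα.trans_le hαG
  have hηG2 : η * (4 * G ^ 2) ≤ α := (le_div_iff₀ (by positivity)).1 hη
  have hηG : η * G ≤ 1 / 4 := by nlinarith
  have hηα : η * α ≤ 1 / 4 := by nlinarith
  have hCσ' : η * C ^ 2 / α ≤ η ^ 2 * σ ^ 2 := by
    rw [div_le_iff₀ hα]
    nlinarith
  have hstep (ω : Ω) := IsNearestPointIn.norm_sub_sq_le_of_strongMono hF hsc hGlip hXcv hxsX hxs
    hα hη0.le hηG hbias (hxp ω)
  calc ∫ ω, ‖xp ω - xstar‖ ^ 2 ∂μ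
      ≤ ((1 - η * α) * ‖x - xstar‖ ^ 2 + η * C ^ 2 / α)
        + 4 / 3 * η ^ 2 * ∫ ω, ‖g ω - ∫ ω', g ω' ∂μ‖ ^ 2 ∂μ :=
        integral_le_of_le_add_inner_centered hg (fun ω => sq_nonneg _) hstep
    _ ≤ (1 - η * α) * ‖x - xstar‖ ^ 2 + 7 / 3 * (η ^ 2 * σ ^ 2) := by
        nlinarith [mul_le_mul_of_nonneg_left hvar (by positivity : (0 : ℝ) ≤ 4 / 3 * η ^ 2)]
    _ ≤ _ := by
        have := one_sub_mul_add_le_div_one_add (by positivity) hηα (sq_nonneg ‖x - xstar‖)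
          (by positivity : 0 ≤ η ^ 2 * σ ^ 2)
        rwa [mul_assoc 4 (η ^ 2)]

/-- One-step contraction of the epoch-based first-order method: for `F`
differentiable, `α`-strongly convex with `G`-Lipschitz gradient and minimizer `x*` over a
nonempty closed convex set `X`, a point `x ∈ X`, step size `0 < η ≤ α/(4G²)`, and a
square-integrable stochastic gradient `ĝ` with variance at most `σ²` and bias
`‖E ĝ − ∇F(x)‖ ≤ C` where `C² ≤ αησ²`, the projected update `x⁺ = proj_X(x − η ĝ)` satisfies
`E‖x⁺ − x*‖² ≤ ‖x − x*‖²/(1 + ηα) + 4η²σ²/(1 + ηα)`. -/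
theorem stmt15 {d : ℕ} {Ω : Type*} [MeasurableSpace Ω]
    (μ : Measure Ω) [IsProbabilityMeasure μ]
    (X : Set (EuclideanSpace ℝ (Fin d)))
    (hXne : X.Nonempty) (hXcl : IsClosed X) (hXcv : Convex ℝ X)
    (F : EuclideanSpace ℝ (Fin d) → ℝ) (hF : Differentiable ℝ F)
    (α G : ℝ) (hα : 0 < α) (hG : 0 ≤ G)
    (hsc : ∀ x y, α * ‖x - y‖ ^ 2 ≤ ⟪gradient F x - gradient F y, x - y⟫)
    (hGlip : ∀ x y, ‖gradient F x - gradient F y‖ ≤ G * ‖x - y‖)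
    (xstar : EuclideanSpace ℝ (Fin d)) (hxsX : xstar ∈ X) (hxs : IsMinOn F X xstar)
    (x : EuclideanSpace ℝ (Fin d)) (hx : x ∈ X)
    (η σ C : ℝ) (hη0 : 0 < η) (hη : η ≤ α / (4 * G ^ 2)) (hσ : 0 ≤ σ) (hC : 0 ≤ C)
    (hCσ : C ^ 2 ≤ α * η * σ ^ 2)
    (g : Ω → EuclideanSpace ℝ (Fin d)) (hg : MemLp g 2 μ)
    (hbias : ‖(∫ ω, g ω ∂μ) - gradient F x‖ ≤ C)
    (hvar : ∫ ω, ‖g ω - ∫ ω', g ω' ∂μ‖ ^ 2 ∂μ ≤ σ ^ 2)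
    (xp : Ω → EuclideanSpace ℝ (Fin d))
    (hxp : ∀ ω, xp ω ∈ X ∧
      ∀ y ∈ X, ‖xp ω - (x - η • g ω)‖ ≤ ‖y - (x - η • g ω)‖) :
    ∫ ω, ‖xp ω - xstar‖ ^ 2 ∂μ
      ≤ (1 / (1 + η * α)) * ‖x - xstar‖ ^ 2 + 4 * η ^ 2 * σ ^ 2 / (1 + η * α) :=
  stmt15_general μ X hXcv F hF α G hα hsc hGlip xstar hxsX hxs x η σ C hη0 hη hCσ g hg hbias hvar xp
    hxp
end

section
/- Let K ⊆ ℝ^d be a nonempty closed convex set, let F̃ : ℝ^d → ℝ be differentiable and (α/2)-strongly convex with α > 0, and let x̄ be the minimizer of F̃ over K. Fix x ∈ K, a step size η > 0, and constants M, C ≥ 0. Let ĝ be a square-integrable random vector in ℝ^d with mean μ = E[ĝ] satisfying E‖ĝ‖² ≤ M² and ‖μ − ∇F̃(x)‖ ≤ C. Then the updated point x⁺ = proj_K(x − η ĝ) satisfies E‖x⁺ − x̄‖² ≤ (1 − ηα/2)‖x − x̄‖² + η²M² + (2η/α)C². -/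
/-!
Projection onto `K` is nonexpansive and fixes `x̄`, so `‖x⁺ - x̄‖² ≤ ‖x - x̄ - η ĝ‖²`; taking
expectations bounds `E‖x⁺ - x̄‖²` by `‖x - x̄‖² - 2η⟪x - x̄, E ĝ⟫ + η² E‖ĝ‖²`. Strong monotonicity
of `∇F̃` combined with the first-order optimality condition `⟪∇F̃(x̄), x - x̄⟫ ≥ 0` gives
`⟪∇F̃(x), x - x̄⟫ ≥ (α/2)‖x - x̄‖²`, the bias costs at most `C‖x - x̄‖`, and
`2C‖x - x̄‖ ≤ (α/2)‖x - x̄‖² + 2C²/α` absorbs that cost.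
-/

open MeasureTheory RealInnerProductSpace

section NearestPoint

variable {E : Type*} [NormedAddCommGroup E] {K : Set E}

def IsNearestPoint (K : Set E) (y u : E) : Prop :=
  u ∈ K ∧ ∀ z ∈ K, ‖u - y‖ ≤ ‖z - y‖

theorem isNearestPoint_self {z : E} (hz : z ∈ K) : IsNearestPoint K z z :=
  ⟨hz, fun w _ => by simp⟩

variable [InnerProductSpace ℝ E]

theorem IsNearestPoint.inner_sub_nonpos (hK : Convex ℝ K) {y u z : E}
    (h : IsNearestPoint K y u) (hz : z ∈ K) : ⟪y - u, z - u⟫ ≤ 0 := by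
  have : Nonempty K := ⟨⟨u, h.1⟩⟩
  refine (norm_eq_iInf_iff_real_inner_le_zero hK h.1).mp (le_antisymm ?_ ?_) z hz
  · exact le_ciInf fun w => by simpa only [norm_sub_rev y] using h.2 w w.2
  · exact ciInf_le ⟨0, Set.forall_mem_range.2 fun _ => norm_nonneg _⟩ (⟨u, h.1⟩ : K)

theorem norm_sub_le_of_inner_sub_nonpos {y₁ y₂ u₁ u₂ : E}
    (h₁ : ⟪y₁ - u₁, u₂ - u₁⟫ ≤ 0) (h₂ : ⟪y₂ - u₂, u₁ - u₂⟫ ≤ 0) :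
    ‖u₁ - u₂‖ ≤ ‖y₁ - y₂‖ := by
  have key : ‖u₁ - u₂‖ ^ 2 ≤ ⟪y₁ - y₂, u₁ - u₂⟫ := by
    have e : ⟪y₁ - u₁, u₂ - u₁⟫ + ⟪y₂ - u₂, u₁ - u₂⟫ = ⟪(u₁ - u₂) - (y₁ - y₂), u₁ - u₂⟫ := by
      rw [← neg_sub u₁ u₂, inner_neg_right, ← sub_eq_neg_add, ← inner_sub_left]
      congr 1
      abel
    rw [inner_sub_left (u₁ - u₂), real_inner_self_eq_norm_sq] at e
    linarith
  have cs := real_inner_le_norm (y₁ - y₂) (u₁ - u₂)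
  nlinarith [norm_nonneg (u₁ - u₂), norm_nonneg (y₁ - y₂)]

theorem IsNearestPoint.norm_sub_le (hK : Convex ℝ K) {y₁ y₂ u₁ u₂ : E}
    (h₁ : IsNearestPoint K y₁ u₁) (h₂ : IsNearestPoint K y₂ u₂) : ‖u₁ - u₂‖ ≤ ‖y₁ - y₂‖ :=
  norm_sub_le_of_inner_sub_nonpos (h₁.inner_sub_nonpos hK h₂.1) (h₂.inner_sub_nonpos hK h₁.1)

theorem IsNearestPoint.norm_sub_sq_le (hK : Convex ℝ K) {y u z : E}
    (h : IsNearestPoint K y u) (hz : z ∈ K) : ‖u - z‖ ^ 2 ≤ ‖y - z‖ ^ 2 := by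
  have := h.norm_sub_le hK (isNearestPoint_self hz)
  gcongr

theorem exists_isNearestPoint [CompleteSpace E] (hne : K.Nonempty) (hcl : IsClosed K)
    (hK : Convex ℝ K) (y : E) : ∃ u, IsNearestPoint K y u := by
  obtain ⟨u, hu, hmin⟩ := exists_norm_eq_iInf_of_complete_convex hne hcl.isComplete hK y
  have : Nonempty K := ⟨⟨u, hu⟩⟩
  refine ⟨u, hu, fun z hz => ?_⟩
  rw [norm_sub_rev u, norm_sub_rev z, hmin]
  exact ciInf_le ⟨0, Set.forall_mem_range.2 fun _ => norm_nonneg _⟩ (⟨z, hz⟩ : K)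

end NearestPoint

section RandomProjection

variable {E : Type*} [NormedAddCommGroup E] [InnerProductSpace ℝ E] [CompleteSpace E]
  {K : Set E} {Ω : Type*} [MeasurableSpace Ω] {μ : Measure Ω}

/-- The nearest point is a 1-Lipschitz function of the projected point, so it inherits
measurability. -/
theorem aestronglyMeasurable_of_isNearestPoint (hne : K.Nonempty) (hcl : IsClosed K)
    (hK : Convex ℝ K) {Y X : Ω → E} (hY : AEStronglyMeasurable Y μ)
    (hX : ∀ ω, IsNearestPoint K (Y ω) (X ω)) : AEStronglyMeasurable X μ := by
  choose P hP using exists_isNearestPoint hne hcl hK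
  have hPlip : LipschitzWith 1 P := LipschitzWith.of_dist_le_mul fun y₁ y₂ => by
    simpa only [NNReal.coe_one, one_mul, dist_eq_norm] using (hP y₁).norm_sub_le hK (hP y₂)
  have hXP : X = P ∘ Y := funext fun ω => by
    have := (hX ω).norm_sub_le hK (hP (Y ω))
    rwa [sub_self, norm_zero, norm_le_zero_iff, sub_eq_zero] at this
  exact hXP ▸ hPlip.continuous.comp_aestronglyMeasurable hY

theorem integral_norm_sub_sq_le_of_isNearestPoint [IsFiniteMeasure μ] (hne : K.Nonempty)
    (hcl : IsClosed K) (hK : Convex ℝ K) {Y X : Ω → E} (hY : MemLp Y 2 μ)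
    (hX : ∀ ω, IsNearestPoint K (Y ω) (X ω)) {z : E} (hz : z ∈ K) :
    ∫ ω, ‖X ω - z‖ ^ 2 ∂μ ≤ ∫ ω, ‖Y ω - z‖ ^ 2 ∂μ := by
  have hYz : Integrable (fun ω => ‖Y ω - z‖ ^ 2) μ := (hY.sub (memLp_const z)).norm.integrable_sq
  have hXm : AEStronglyMeasurable X μ :=
    aestronglyMeasurable_of_isNearestPoint hne hcl hK hY.aestronglyMeasurable hX
  have hle : ∀ ω, ‖X ω - z‖ ^ 2 ≤ ‖Y ω - z‖ ^ 2 := fun ω => (hX ω).norm_sub_sq_le hK hz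
  refine integral_mono (hYz.mono ((hXm.sub aestronglyMeasurable_const).norm.pow 2) ?_) hYz hle
  filter_upwards with ω
  simpa only [norm_pow, norm_norm] using hle ω

theorem integral_norm_sub_smul_sq [IsProbabilityMeasure μ] {g : Ω → E} (hg : MemLp g 2 μ)
    (v : E) (η : ℝ) :
    ∫ ω, ‖v - η • g ω‖ ^ 2 ∂μ
      = ‖v‖ ^ 2 - 2 * η * ⟪v, ∫ ω, g ω ∂μ⟫ + η ^ 2 * ∫ ω, ‖g ω‖ ^ 2 ∂μ := by
  have hg₁ : Integrable g μ := hg.integrable one_le_two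
  have hinner : Integrable (fun ω => 2 * η * ⟪v, g ω⟫) μ := (hg₁.const_inner v).const_mul _
  have hlin : Integrable (fun ω => ‖v‖ ^ 2 - 2 * η * ⟪v, g ω⟫) μ := (integrable_const _).sub hinner
  have hsq : Integrable (fun ω => η ^ 2 * ‖g ω‖ ^ 2) μ := hg.norm.integrable_sq.const_mul _
  simp_rw [norm_sub_sq_real, real_inner_smul_right, norm_smul, mul_pow, Real.norm_eq_abs, sq_abs,
    ← mul_assoc]
  rw [integral_add hlin hsq, integral_sub (integrable_const _) hinner,
    integral_const, integral_const_mul, integral_const_mul, integral_inner hg₁]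
  simp

end RandomProjection

section FirstOrderOptimality

variable {E : Type*} [NormedAddCommGroup E] [InnerProductSpace ℝ E] [CompleteSpace E]
  {F : E → ℝ} {K : Set E} {a x : E}

theorem IsMinOn.inner_gradient_sub_nonneg_s16 (hF : DifferentiableAt ℝ F a) (hmin : IsMinOn F K a)
    (hK : Convex ℝ K) (ha : a ∈ K) (hx : x ∈ K) : 0 ≤ ⟪gradient F a, x - a⟫ := by
  have := hmin.localize.hasFDerivWithinAt_nonneg hF.hasGradientAt.hasFDerivAt.hasFDerivWithinAt
    (sub_mem_posTangentConeAt_of_segment_subset (hK.segment_subset ha hx))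
  simpa using this

theorem IsMinOn.mul_norm_sub_sq_le_inner_gradient {m : ℝ}
    (hmono : m * ‖x - a‖ ^ 2 ≤ ⟪gradient F x - gradient F a, x - a⟫)
    (hF : DifferentiableAt ℝ F a) (hmin : IsMinOn F K a) (hK : Convex ℝ K) (ha : a ∈ K)
    (hx : x ∈ K) : m * ‖x - a‖ ^ 2 ≤ ⟪gradient F x, x - a⟫ := by
  have := hmin.inner_gradient_sub_nonneg_s16 hF hK ha hx
  rw [inner_sub_left] at hmono
  linarith

end FirstOrderOptimality

theorem two_mul_mul_le_half_mul_sq_add_div {α : ℝ} (hα : 0 < α) (C r : ℝ) :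
    2 * C * r ≤ α / 2 * r ^ 2 + 2 * C ^ 2 / α := by
  have hsq : 0 ≤ (α * r - 2 * C) ^ 2 / (2 * α) := by positivity
  have : (α * r - 2 * C) ^ 2 / (2 * α) = α / 2 * r ^ 2 + 2 * C ^ 2 / α - 2 * C * r := by
    field_simp
    ring
  linarith

theorem stmt16_general {d : ℕ} {Ω : Type*} [MeasurableSpace Ω]
    (μ : Measure Ω) [IsProbabilityMeasure μ]
    (K : Set (EuclideanSpace ℝ (Fin d)))
    (hKne : K.Nonempty) (hKcl : IsClosed K) (hKcv : Convex ℝ K)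
    (Ft : EuclideanSpace ℝ (Fin d) → ℝ) (hFt : Differentiable ℝ Ft)
    (α : ℝ) (hα : 0 < α)
    (hsc : ∀ x y, (α / 2) * ‖x - y‖ ^ 2 ≤ ⟪gradient Ft x - gradient Ft y, x - y⟫)
    (xbar : EuclideanSpace ℝ (Fin d)) (hxbK : xbar ∈ K) (hxb : IsMinOn Ft K xbar)
    (x : EuclideanSpace ℝ (Fin d)) (hx : x ∈ K)
    (η M C : ℝ) (hη : 0 < η)
    (g : Ω → EuclideanSpace ℝ (Fin d)) (hg : MemLp g 2 μ)
    (hbias : ‖(∫ ω, g ω ∂μ) - gradient Ft x‖ ≤ C)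
    (hmom : ∫ ω, ‖g ω‖ ^ 2 ∂μ ≤ M ^ 2)
    (xp : Ω → EuclideanSpace ℝ (Fin d))
    (hxp : ∀ ω, xp ω ∈ K ∧
      ∀ y ∈ K, ‖xp ω - (x - η • g ω)‖ ≤ ‖y - (x - η • g ω)‖) :
    ∫ ω, ‖xp ω - xbar‖ ^ 2 ∂μ
      ≤ (1 - η * α / 2) * ‖x - xbar‖ ^ 2 + η ^ 2 * M ^ 2 + (2 * η / α) * C ^ 2 := by
  set v := x - xbar
  have hdescent : α / 2 * ‖v‖ ^ 2 ≤ ⟪gradient Ft x, v⟫ :=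
    hxb.mul_norm_sub_sq_le_inner_gradient (hsc x xbar) (hFt xbar) hKcv hxbK hx
  have hdrift : α / 2 * ‖v‖ ^ 2 - C * ‖v‖ ≤ ⟪v, ∫ ω, g ω ∂μ⟫ := by
    have := real_inner_le_norm (gradient Ft x - ∫ ω, g ω ∂μ) v
    rw [norm_sub_rev, inner_sub_left, real_inner_comm v (∫ ω, g ω ∂μ)] at this
    linarith [mul_le_mul_of_nonneg_right hbias (norm_nonneg v)]
  have hstep : ∫ ω, ‖xp ω - xbar‖ ^ 2 ∂μ
      ≤ ‖v‖ ^ 2 - 2 * η * ⟪v, ∫ ω, g ω ∂μ⟫ + η ^ 2 * ∫ ω, ‖g ω‖ ^ 2 ∂μ := by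
    calc ∫ ω, ‖xp ω - xbar‖ ^ 2 ∂μ ≤ ∫ ω, ‖(x - η • g ω) - xbar‖ ^ 2 ∂μ :=
          integral_norm_sub_sq_le_of_isNearestPoint hKne hKcl hKcv
            ((memLp_const x).sub (hg.const_smul η)) hxp hxbK
      _ = ∫ ω, ‖v - η • g ω‖ ^ 2 ∂μ := by simp_rw [sub_right_comm x]; rfl
      _ = _ := integral_norm_sub_smul_sq hg v η
  have hmom' : η ^ 2 * ∫ ω, ‖g ω‖ ^ 2 ∂μ ≤ η ^ 2 * M ^ 2 := by gcongr
  have hC' : 2 * η / α * C ^ 2 = η * (2 * C ^ 2 / α) := by ring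
  linarith [mul_le_mul_of_nonneg_left hdrift hη.le,
    mul_le_mul_of_nonneg_left (two_mul_mul_le_half_mul_sq_add_div hα C ‖v‖) hη.le]

/-- One-step estimate for the epoch-based zeroth-order method: for `F̃`
differentiable and `(α/2)`-strongly convex with minimizer `x̄` over a nonempty closed convex
set `K`, a point `x ∈ K`, step size `η > 0`, and a square-integrable stochastic gradient `ĝ`
with second moment at most `M²` and bias `‖E ĝ − ∇F̃(x)‖ ≤ C`, the projected update
`x⁺ = proj_K(x − η ĝ)` satisfies
`E‖x⁺ − x̄‖² ≤ (1 − ηα/2)‖x − x̄‖² + η²M² + (2η/α)C²`. -/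
theorem stmt16 {d : ℕ} {Ω : Type*} [MeasurableSpace Ω]
    (μ : Measure Ω) [IsProbabilityMeasure μ]
    (K : Set (EuclideanSpace ℝ (Fin d)))
    (hKne : K.Nonempty) (hKcl : IsClosed K) (hKcv : Convex ℝ K)
    (Ft : EuclideanSpace ℝ (Fin d) → ℝ) (hFt : Differentiable ℝ Ft)
    (α : ℝ) (hα : 0 < α)
    (hsc : ∀ x y, (α / 2) * ‖x - y‖ ^ 2 ≤ ⟪gradient Ft x - gradient Ft y, x - y⟫)
    (xbar : EuclideanSpace ℝ (Fin d)) (hxbK : xbar ∈ K) (hxb : IsMinOn Ft K xbar)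
    (x : EuclideanSpace ℝ (Fin d)) (hx : x ∈ K)
    (η M C : ℝ) (hη : 0 < η) (hM : 0 ≤ M) (hC : 0 ≤ C)
    (g : Ω → EuclideanSpace ℝ (Fin d)) (hg : MemLp g 2 μ)
    (hbias : ‖(∫ ω, g ω ∂μ) - gradient Ft x‖ ≤ C)
    (hmom : ∫ ω, ‖g ω‖ ^ 2 ∂μ ≤ M ^ 2)
    (xp : Ω → EuclideanSpace ℝ (Fin d))
    (hxp : ∀ ω, xp ω ∈ K ∧
      ∀ y ∈ K, ‖xp ω - (x - η • g ω)‖ ≤ ‖y - (x - η • g ω)‖) :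
    ∫ ω, ‖xp ω - xbar‖ ^ 2 ∂μ
      ≤ (1 - η * α / 2) * ‖x - xbar‖ ^ 2 + η ^ 2 * M ^ 2 + (2 * η / α) * C ^ 2 :=
  stmt16_general μ K hKne hKcl hKcv Ft hFt α hα hsc xbar hxbK hxb x hx η M C hη g hg hbias hmom xp
    hxp
end
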